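/- arXiv:1401.4682 — 8 statements merged into one kernel-verified Lean document; each statement's English description precedes it below -/
import Mathlib

section
/- The function y ↦ ∑_{n ∈ ℤ, n ≠ 0} log((4y² + n²)/n²) − 4πy + log(4y²) is bounded on the interval [1, ∞); that is, there exists a constant C > 0 such that for all y ≥ 1, |∑_{n ≠ 0} log((4y² + n²)/n²) − 4πy + log(4y²)| ≤ C. -/
/-!
Euler's product for `sin`, evaluated at `x * I`, gives `sinh (π x) = π x ∏ (1 + x² / n²)`,
hence `∑_{n ≠ 0} log (1 + x² / n²) = 2 log (sinh (π x) / (π x))`. At `x = 2y`, writing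
`sinh t = eᵗ (1 - e^{-2t}) / 2`, the linear term `4πy` and the logarithm `log (4y²)` cancel
exactly and the expression equals `2 log (1 - e^{-4πy}) - 2 log (2π)`, which is bounded for
`y ≥ 1`.
-/

open Filter Real Topology

namespace Real

theorem tendsto_euler_sinh_prod (x : ℝ) :
    Tendsto (fun n : ℕ => π * x * ∏ j ∈ Finset.range n, (1 + x ^ 2 / ((j : ℝ) + 1) ^ 2))
      atTop (𝓝 (sinh (π * x))) := by
  convert (Complex.continuous_im.tendsto _).comp
    (Complex.tendsto_euler_sin_prod (x * Complex.I)) using 1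
  · ext n
    have hterm : (π : ℂ) * (x * Complex.I) * ∏ j ∈ Finset.range n,
        (1 - (x * Complex.I) ^ 2 / ((j : ℂ) + 1) ^ 2) =
        ((π * x * ∏ j ∈ Finset.range n, (1 + x ^ 2 / ((j : ℝ) + 1) ^ 2) : ℝ) : ℂ) * Complex.I := by
      push_cast
      simp only [mul_pow, Complex.I_sq]
      ring_nf
    rw [Function.comp_apply, hterm, Complex.mul_I_im, Complex.ofReal_re]
  · rw [← mul_assoc, ← Complex.ofReal_mul, Complex.sin_mul_I, ← Complex.ofReal_sinh,
    Complex.mul_I_im, Complex.ofReal_re]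

theorem hasSum_log_one_add_sq_div_sq {x : ℝ} (hx : x ≠ 0) :
    HasSum (fun n : ℕ => log (1 + x ^ 2 / ((n : ℝ) + 1) ^ 2)) (log (sinh (π * x) / (π * x))) := by
  have hπx : π * x ≠ 0 := mul_ne_zero pi_ne_zero hx
  have hsum : Summable (fun n : ℕ => log (1 + x ^ 2 / ((n : ℝ) + 1) ^ 2)) := by
    refine summable_log_one_add_of_summable ?_
    simpa [div_eq_mul_inv] using
      ((summable_nat_add_iff 1).mpr (summable_nat_pow_inv.mpr one_lt_two)).mul_left (x ^ 2)
  have hprod := (hasProd_of_hasSum_log (fun n => by positivity) hsum.hasSum).tendsto_prod_nat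
  have hsinh := (tendsto_euler_sinh_prod x).const_mul (π * x)⁻¹
  simp only [inv_mul_cancel_left₀ hπx, inv_mul_eq_div] at hsinh
  rw [← tendsto_nhds_unique hprod hsinh, log_exp]
  exact hsum.hasSum

/-- The `n = 0` term is `log (x ^ 2 / 0) = log 0 = 0`, so the sum over `ℤ` equals the sum over
the nonzero integers. -/
theorem hasSum_log_add_sq_div_sq {x : ℝ} (hx : x ≠ 0) :
    HasSum (fun n : {n : ℤ // n ≠ 0} => log ((x ^ 2 + (n : ℝ) ^ 2) / (n : ℝ) ^ 2))
      (2 * log (sinh (π * x) / (π * x))) := by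
  set f : ℤ → ℝ := fun n => log ((x ^ 2 + (n : ℝ) ^ 2) / (n : ℝ) ^ 2)
  have hf : ∀ n : ℕ, f (n + 1) = log (1 + x ^ 2 / ((n : ℝ) + 1) ^ 2) := fun n => by
    simp only [f]; push_cast; rw [add_div, div_self (by positivity), add_comm]
  have hf_neg : ∀ n : ℕ, f (-(n + 1)) = f (n + 1) := fun n => by
    simp only [f]; push_cast; rw [neg_sq]
  have hf_zero : f 0 = 0 := by simp [f]
  have hZ : HasSum f (2 * log (sinh (π * x) / (π * x))) := by
    have h := hasSum_log_one_add_sq_div_sq hx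
    simpa only [hf_zero, add_zero, two_mul] using
      HasSum.of_add_one_of_neg_add_one (h.congr_fun hf) (h.congr_fun fun n => by rw [hf_neg, hf])
  exact (hasSum_subtype_iff_of_support_subset (s := {n : ℤ | n ≠ 0})
    fun n hn h0 => hn (by rw [h0]; exact hf_zero)).mpr hZ

theorem log_sinh_div_self {t : ℝ} (ht : 0 < t) :
    log (sinh t / t) = t + log (1 - exp (-(2 * t))) - log (2 * t) := by
  have h1 : 0 < 1 - exp (-(2 * t)) := sub_pos.mpr (exp_lt_one_iff.mpr (by linarith))
  have hsinh : sinh t = exp t * (1 - exp (-(2 * t))) / (2 * t) * t := by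
    rw [sinh_eq, mul_sub, ← exp_add]
    field_simp
    ring_nf
  rw [hsinh, mul_div_cancel_right₀ _ ht.ne', log_div (by positivity) (by positivity),
    log_mul (exp_pos t).ne' h1.ne', log_exp]

end Real

theorem tsum_log_sub_add_log_eq {y : ℝ} (hy : 0 < y) :
    (∑' n : {n : ℤ // n ≠ 0}, log ((4 * y ^ 2 + (n.1 : ℝ) ^ 2) / (n.1 : ℝ) ^ 2))
      - 4 * π * y + log (4 * y ^ 2) = 2 * log (1 - exp (-(4 * π * y))) - 2 * log (2 * π) := by
  have h2y : 0 < 2 * y := by positivity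
  have hexp : -(2 * (π * (2 * y))) = -(4 * π * y) := by ring
  have hlog : log (2 * (π * (2 * y))) = log (2 * π) + log (2 * y) := by
    rw [← log_mul (by positivity) h2y.ne']
    ring_nf
  rw [show 4 * y ^ 2 = (2 * y) ^ 2 by ring, (hasSum_log_add_sq_div_sq h2y.ne').tsum_eq,
    log_sinh_div_self (by positivity), hexp, hlog, log_pow]
  push_cast
  ring

/-- The function
`y ↦ ∑_{n ≠ 0} log((4y² + n²)/n²) − 4πy + log(4y²)` is bounded on `[1, ∞)`. -/
theorem sum_log_asymptotic_bounded :
    ∃ C > (0 : ℝ), ∀ y : ℝ, 1 ≤ y →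
      |(∑' n : {n : ℤ // n ≠ 0}, Real.log ((4 * y ^ 2 + (n.1 : ℝ) ^ 2) / (n.1 : ℝ) ^ 2))
          - 4 * Real.pi * y + Real.log (4 * y ^ 2)| ≤ C := by
  have hexp_lt : exp (-(4 * π)) < 1 := exp_lt_one_iff.mpr (by linarith [pi_pos])
  have hlog_neg : log (1 - exp (-(4 * π))) < 0 :=
    log_neg (by linarith) (by linarith [exp_pos (-(4 * π))])
  have hlog_2π : 0 < log (2 * π) := log_pos (by linarith [pi_gt_three])
  refine ⟨2 * log (2 * π) - 2 * log (1 - exp (-(4 * π))), by linarith, fun y hy => ?_⟩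
  have hexp_le : exp (-(4 * π * y)) ≤ exp (-(4 * π)) := exp_le_exp.mpr (by nlinarith [pi_pos])
  have hlower : log (1 - exp (-(4 * π))) ≤ log (1 - exp (-(4 * π * y))) :=
    log_le_log (by linarith) (by linarith)
  have hupper : log (1 - exp (-(4 * π * y))) ≤ 0 :=
    log_nonpos (by linarith) (by linarith [exp_pos (-(4 * π * y))])
  rw [tsum_log_sub_add_log_eq (by linarith), abs_le]
  constructor <;> linarith
end

section
/- Let f : (0, ∞) → ℝ be defined by f(y) = ∑_{n ∈ ℤ, n ≠ 0} log((4y² + n²)/n²). Then f is twice differentiable on (0, ∞) and for every y > 0 one has −y²·f''(y) = 2·(2πy/sinh(2πy))² − 2. -/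
/-!
Substituting `z = i x` in Euler's sine product gives
`sinh (π x) = π x ∏_{j ≥ 1} (1 + x² / j²)`. Taking logarithms at `x = 2y` and pairing `n` with `-n`
yields `f y = 2 log (sinh (2πy) / (2πy))` for `y > 0`, and the identity follows by differentiating
twice, using `cosh² - sinh² = 1`.
-/

open Real Filter Topology

theorem Real.tendsto_euler_sinh_prod_s6 (x : ℝ) :
    Tendsto (fun n : ℕ => π * x * ∏ j ∈ Finset.range n, (1 + x ^ 2 / ((j : ℝ) + 1) ^ 2))
      atTop (𝓝 (sinh (π * x))) := by
  have h := (Complex.tendsto_euler_sin_prod (x * Complex.I)).const_mul (-Complex.I)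
  rw [← mul_assoc, ← Complex.ofReal_mul, Complex.sin_mul_I, ← Complex.ofReal_sinh,
    mul_left_comm, neg_mul, Complex.I_mul_I, neg_neg, mul_one] at h
  refine tendsto_ofReal_iff.mp (h.congr fun n => ?_)
  have hI (j : ℕ) :
      1 - (x * Complex.I) ^ 2 / ((j : ℂ) + 1) ^ 2 = 1 + x ^ 2 / ((j : ℂ) + 1) ^ 2 := by
    rw [mul_pow, Complex.I_sq]; ring
  simp only [hI]
  push_cast
  linear_combination
    (-(π * x * ∏ j ∈ Finset.range n, (1 + (x : ℂ) ^ 2 / ((j : ℂ) + 1) ^ 2))) * Complex.I_sq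

theorem HasSum.subtype_ne_zero_of_add_one_of_neg_add_one {M : Type*} [AddCommMonoid M] [TopologicalSpace M]
    [ContinuousAdd M] {f : ℤ → M} {a b : M} (h₁ : HasSum (fun n : ℕ => f (n + 1)) a)
    (h₂ : HasSum (fun n : ℕ => f (-(n + 1))) b) :
    HasSum (fun n : {n : ℤ // n ≠ 0} => f n) (a + b) := by
  set g := Set.indicator {n : ℤ | n ≠ 0} f
  have hg : ∀ n : ℕ, g (n + 1) = f (n + 1) ∧ g (-(n + 1)) = f (-(n + 1)) := fun n =>
    ⟨Set.indicator_of_mem (show (n : ℤ) + 1 ≠ 0 by omega) f,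
      Set.indicator_of_mem (show -((n : ℤ) + 1) ≠ 0 by omega) f⟩
  have hg₀ : g 0 = 0 := Set.indicator_of_notMem (not_not.mpr rfl) f
  have := HasSum.of_add_one_of_neg_add_one (f := g) (by simpa only [hg] using h₁)
    (by simpa only [hg] using h₂)
  rw [hg₀, add_zero] at this
  exact (hasSum_subtype_iff_indicator (s := {n : ℤ | n ≠ 0})).mpr this

theorem Real.hasSum_log_one_add_sq_div_sq_s6 {x : ℝ} (hx : x ≠ 0) :
    HasSum (fun j : ℕ => log (1 + x ^ 2 / ((j : ℝ) + 1) ^ 2)) (log (sinh (π * x) / (π * x))) := by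
  have hπx : π * x ≠ 0 := mul_ne_zero pi_ne_zero hx
  refine (hasSum_iff_tendsto_nat_of_nonneg (fun j => log_nonneg ?_) _).mpr ?_
  · exact le_add_of_nonneg_right (by positivity)
  have hprod := (tendsto_euler_sinh_prod_s6 x).div_const (π * x)
  simp only [mul_div_cancel_left₀ _ hπx] at hprod
  have hlog := ((continuousAt_log (div_ne_zero (sinh_ne_zero.mpr hπx) hπx)).tendsto).comp hprod
  refine hlog.congr fun n => ?_
  rw [Function.comp_apply, log_prod fun j _ => by positivity]

theorem Real.hasSum_log_four_mul_sq_add_sq_div_sq {y : ℝ} (hy : y ≠ 0) :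
    HasSum (fun n : {n : ℤ // n ≠ 0} => log ((4 * y ^ 2 + (n : ℝ) ^ 2) / (n : ℝ) ^ 2))
      (2 * log (sinh (2 * π * y) / (2 * π * y))) := by
  have h := hasSum_log_one_add_sq_div_sq_s6 (mul_ne_zero two_ne_zero hy)
  have hterm (n : ℤ) (hn : n ≠ 0) :
      log ((4 * y ^ 2 + (n : ℝ) ^ 2) / (n : ℝ) ^ 2) = log (1 + (2 * y) ^ 2 / (n : ℝ) ^ 2) := by
    have : (n : ℝ) ^ 2 ≠ 0 := by positivity
    rw [add_div, div_self this, add_comm, mul_pow]; norm_num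
  rw [← mul_assoc, mul_comm π] at h
  rw [two_mul]
  refine .subtype_ne_zero_of_add_one_of_neg_add_one
    (f := fun n : ℤ => log ((4 * y ^ 2 + (n : ℝ) ^ 2) / (n : ℝ) ^ 2)) ?_ ?_ <;>
  · convert h using 2 with j
    rw [hterm _ (by omega)]
    push_cast
    ring_nf

theorem Real.hasDerivAt_log_sinh_div_self {u : ℝ} (hu : u ≠ 0) :
    HasDerivAt (fun v => log (sinh v / v)) (cosh u / sinh u - u⁻¹) u := by
  have hs : sinh u ≠ 0 := sinh_ne_zero.mpr hu
  refine (((hasDerivAt_sinh u).div (hasDerivAt_id' u) hu).log (div_ne_zero hs hu)).congr_deriv ?_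
  rw [Pi.div_apply]
  field_simp

theorem Real.hasDerivAt_cosh_div_sinh_sub_inv {u : ℝ} (hu : u ≠ 0) :
    HasDerivAt (fun v => cosh v / sinh v - v⁻¹) ((u ^ 2)⁻¹ - (sinh u ^ 2)⁻¹) u := by
  have hs : sinh u ≠ 0 := sinh_ne_zero.mpr hu
  refine (((hasDerivAt_cosh u).div (hasDerivAt_sinh u) hs).sub (hasDerivAt_inv hu)).congr_deriv ?_
  field_simp
  linear_combination (-u ^ 2) * cosh_sq u

/-- The function `f(y) = ∑_{n ≠ 0} log((4y² + n²)/n²)` is twice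
differentiable on `(0, ∞)` and `−y² f''(y) = 2 (2πy/sinh(2πy))² − 2` for all `y > 0`. -/
theorem hyperbolic_laplacian_of_parabolic_sum :
    let f : ℝ → ℝ := fun y =>
      ∑' n : {n : ℤ // n ≠ 0}, Real.log ((4 * y ^ 2 + (n.1 : ℝ) ^ 2) / (n.1 : ℝ) ^ 2)
    (∀ y ∈ Set.Ioi (0 : ℝ), DifferentiableAt ℝ f y) ∧
    (∀ y ∈ Set.Ioi (0 : ℝ), DifferentiableAt ℝ (deriv f) y) ∧
    ∀ y ∈ Set.Ioi (0 : ℝ), -y ^ 2 * deriv (deriv f) y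
      = 2 * (2 * Real.pi * y / Real.sinh (2 * Real.pi * y)) ^ 2 - 2 := by
  intro f
  have hf (y : ℝ) (hy : 0 < y) :
      f =ᶠ[𝓝 y] fun t => 2 * log (sinh (2 * π * t) / (2 * π * t)) :=
    eventually_of_mem (Ioi_mem_nhds hy) fun t ht =>
      (hasSum_log_four_mul_sq_add_sq_div_sq (ne_of_gt ht)).tsum_eq
  have hf' (y : ℝ) (hy : 0 < y) : HasDerivAt f
      (2 * ((cosh (2 * π * y) / sinh (2 * π * y) - (2 * π * y)⁻¹) * (2 * π))) y :=
    (((hasDerivAt_log_sinh_div_self (by positivity)).comp y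
      (hasDerivAt_const_mul (2 * π))).const_mul 2).congr_of_eventuallyEq (hf y hy)
  have hf'' (y : ℝ) (hy : 0 < y) : HasDerivAt (deriv f)
      (2 * ((((2 * π * y) ^ 2)⁻¹ - (sinh (2 * π * y) ^ 2)⁻¹) * (2 * π) * (2 * π))) y :=
    ((((hasDerivAt_cosh_div_sinh_sub_inv (by positivity)).comp y
      (hasDerivAt_const_mul (2 * π))).mul_const (2 * π)).const_mul 2).congr_of_eventuallyEq
      (eventually_of_mem (Ioi_mem_nhds hy) fun t ht => (hf' t ht).deriv)
  refine ⟨fun y hy => (hf' y hy).differentiableAt, fun y hy => (hf'' y hy).differentiableAt,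
    fun y hy => ?_⟩
  have hy₀ : y ≠ 0 := ne_of_gt hy
  have hs : sinh (2 * π * y) ≠ 0 := sinh_ne_zero.mpr (by positivity)
  rw [(hf'' y hy).deriv]
  field_simp
  ring
end

section
/- Let (M, d) be a metric space, let 0 < ε < 1, and let z, p, q ∈ M satisfy d(p, q) ≤ ε and d(z, q) ≥ ε. Then sinh²(d(z, p)/2) ≤ 7·coth(ε/2)·sinh²(d(z, q)/2). -/
/-!
The triangle inequality gives `d(z,p)/2 ≤ a/2 + ε/2` with `a = d(z,q) ≥ ε`, and since `ε/2 ≤ a/2`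
the addition formula yields `sinh (a/2 + ε/2) ≤ 2 cosh(ε/2) sinh(a/2)`. For `ε < 1` the factor
`4 cosh²(ε/2) = 2 cosh ε + 2` is at most `7`, and `coth(ε/2) ≥ 1`.
-/

noncomputable def Real.coth (x : ℝ) : ℝ := Real.cosh x / Real.sinh x

namespace Real

lemma one_le_coth {x : ℝ} (hx : 0 < x) : 1 ≤ coth x := by
  rw [coth, one_le_div (sinh_pos_iff.mpr hx)]
  exact (sinh_lt_cosh x).le

lemma sinh_add_le_two_mul_cosh_mul_sinh {x y : ℝ} (hyx : y ≤ x) :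
    sinh (x + y) ≤ 2 * cosh y * sinh x := by
  have h : 0 ≤ sinh (x - y) := sinh_nonneg_iff.mpr (sub_nonneg.mpr hyx)
  rw [sinh_sub] at h
  rw [sinh_add]
  linarith

lemma cosh_le_five_div_two {t : ℝ} (ht : |t| ≤ 1) : cosh t ≤ 5 / 2 :=
  calc cosh t ≤ cosh 1 := cosh_le_cosh.mpr (by rwa [abs_one])
    _ = (exp 1 + exp (-1)) / 2 := cosh_eq 1
    _ ≤ 5 / 2 := by
      have : exp (-1) ≤ 1 := exp_le_one_iff.mpr (by norm_num)
      linarith [exp_one_lt_d9]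

lemma four_mul_cosh_half_sq_le_seven {t : ℝ} (ht : |t| ≤ 1) : 4 * cosh (t / 2) ^ 2 ≤ 7 := by
  have hdouble := cosh_two_mul (t / 2)
  rw [mul_div_cancel₀ t two_ne_zero] at hdouble
  linarith [cosh_le_five_div_two ht, cosh_sq (t / 2)]

end Real

open Real

/-- In a metric space, if `0 < ε < 1`, `d(p,q) ≤ ε` and `d(z,q) ≥ ε`, then
`sinh²(d(z,p)/2) ≤ 7 coth(ε/2) sinh²(d(z,q)/2)`. -/
theorem sinh_sq_dist_le {M : Type*} [MetricSpace M] (ε : ℝ) (hε0 : 0 < ε) (hε1 : ε < 1)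
    (z p q : M) (hpq : dist p q ≤ ε) (hzq : ε ≤ dist z q) :
    Real.sinh (dist z p / 2) ^ 2 ≤ 7 * Real.coth (ε / 2) * Real.sinh (dist z q / 2) ^ 2 := by
  set a := dist z q
  have hzp : dist z p / 2 ≤ a / 2 + ε / 2 := by
    linarith [dist_triangle z q p, dist_comm p q]
  have hsinh_nonneg : 0 ≤ sinh (dist z p / 2) := sinh_nonneg_iff.mpr (by positivity)
  calc sinh (dist z p / 2) ^ 2 ≤ sinh (a / 2 + ε / 2) ^ 2 :=
        pow_le_pow_left₀ hsinh_nonneg (sinh_le_sinh.mpr hzp) 2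
    _ ≤ (2 * cosh (ε / 2) * sinh (a / 2)) ^ 2 :=
        pow_le_pow_left₀ (hsinh_nonneg.trans (sinh_le_sinh.mpr hzp))
          (sinh_add_le_two_mul_cosh_mul_sinh (by linarith)) 2
    _ = 4 * cosh (ε / 2) ^ 2 * sinh (a / 2) ^ 2 := by ring
    _ ≤ 7 * sinh (a / 2) ^ 2 := by
        gcongr
        exact four_mul_cosh_half_sq_le_seven (abs_le.mpr ⟨by linarith, hε1.le⟩)
    _ ≤ 7 * coth (ε / 2) * sinh (a / 2) ^ 2 :=
        mul_le_mul_of_nonneg_right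
          (le_mul_of_one_le_right (by norm_num) (one_le_coth (half_pos hε0))) (sq_nonneg _)
end

section
/- For every real ε with 0 < ε < 1 and every real a with a ≥ ε, one has sinh²((a + ε)/2) ≤ 7·coth(ε/2)·sinh²(a/2). -/
/-!
Expanding `sinh (a/2 + ε/2)` and using `cosh (a/2) sinh (ε/2) ≤ sinh (a/2) cosh (ε/2)`
(that is, `sinh ((a - ε)/2) ≥ 0`) gives `sinh ((a + ε)/2) ≤ 2 sinh (a/2) cosh (ε/2)`.
It remains to bound `4 cosh² (ε/2) = 2 coth (ε/2) sinh ε`, and `sinh ε < sinh 1 < e/2 < 7/2`.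
-/

namespace Real

theorem coth_pos {t : ℝ} (ht : 0 < t) : 0 < coth t :=
  div_pos (cosh_pos t) (sinh_pos_iff.2 ht)

theorem cosh_sq_eq_coth_mul_sinh_two_mul {t : ℝ} (ht : t ≠ 0) :
    cosh t ^ 2 = coth t * sinh (2 * t) / 2 := by
  have hs : sinh t ≠ 0 := sinh_ne_zero.2 ht
  rw [coth, sinh_two_mul]
  field_simp

theorem sinh_one_lt_three_halves : sinh 1 < 3 / 2 := by
  have := sinh_lt_cosh 1
  have := sinh_add_cosh 1
  have := exp_one_lt_three
  linarith

theorem sinh_add_le_two_mul_sinh_mul_cosh {x y : ℝ} (hyx : y ≤ x) :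
    sinh (x + y) ≤ 2 * sinh x * cosh y := by
  have hsub : 0 ≤ sinh (x - y) := sinh_nonneg_iff.2 (sub_nonneg.2 hyx)
  rw [sinh_sub] at hsub
  rw [sinh_add]
  linarith

theorem four_mul_cosh_sq_le_seven_mul_coth {t : ℝ} (ht0 : 0 < t) (ht1 : t < 1 / 2) :
    4 * cosh t ^ 2 ≤ 7 * coth t := by
  have hsinh : sinh (2 * t) ≤ sinh 1 := sinh_le_sinh.2 (by linarith)
  rw [cosh_sq_eq_coth_mul_sinh_two_mul ht0.ne']
  nlinarith [coth_pos ht0, sinh_one_lt_three_halves]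

end Real

open Real

/-- For `0 < ε < 1` and `a ≥ ε`,
`sinh²((a + ε)/2) ≤ 7 coth(ε/2) sinh²(a/2)`. -/
theorem sinh_sq_add_le (ε a : ℝ) (hε0 : 0 < ε) (hε1 : ε < 1) (ha : ε ≤ a) :
    Real.sinh ((a + ε) / 2) ^ 2 ≤ 7 * Real.coth (ε / 2) * Real.sinh (a / 2) ^ 2 := by
  have hlhs : 0 ≤ sinh ((a + ε) / 2) := sinh_nonneg_iff.2 (by linarith)
  have hsplit : sinh ((a + ε) / 2) ≤ 2 * sinh (a / 2) * cosh (ε / 2) := by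
    rw [add_div]
    exact sinh_add_le_two_mul_sinh_mul_cosh (by linarith)
  calc sinh ((a + ε) / 2) ^ 2
      ≤ (2 * sinh (a / 2) * cosh (ε / 2)) ^ 2 := pow_le_pow_left₀ hlhs hsplit 2
    _ = 4 * cosh (ε / 2) ^ 2 * sinh (a / 2) ^ 2 := by ring
    _ ≤ 7 * coth (ε / 2) * sinh (a / 2) ^ 2 :=
      mul_le_mul_of_nonneg_right
        (four_mul_cosh_sq_le_seven_mul_coth (t := ε / 2) (by linarith) (by linarith)) (sq_nonneg _)
end

section
/- For every real ε with 0 < ε < 1 and every real a with a ≥ ε/2, one has sinh²((a + ε)/2) ≤ 14·coth(ε/4)·sinh²(a/2). -/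
namespace Real

lemma one_lt_coth {x : ℝ} (hx : 0 < x) : 1 < coth x := by
  rw [coth, one_lt_div (sinh_pos_iff.mpr hx)]
  linarith [cosh_sub_sinh x, exp_pos (-x)]

lemma coth_le_coth {x y : ℝ} (hx : 0 < x) (hxy : x ≤ y) : coth y ≤ coth x := by
  have hsx : 0 < sinh x := sinh_pos_iff.mpr hx
  have hsy : 0 < sinh y := sinh_pos_iff.mpr (hx.trans_le hxy)
  have hsub : 0 ≤ sinh (y - x) := sinh_nonneg_iff.mpr (sub_nonneg.mpr hxy)
  rw [sinh_sub] at hsub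
  rw [coth, coth, div_le_div_iff₀ hsy hsx]
  linarith

lemma cosh_le_coth_mul_sinh {x y : ℝ} (hx : 0 < x) (hxy : x ≤ y) :
    cosh y ≤ coth x * sinh y := by
  have hsy : 0 < sinh y := sinh_pos_iff.mpr (hx.trans_le hxy)
  calc cosh y = coth y * sinh y := by rw [coth, div_mul_cancel₀ _ hsy.ne']
    _ ≤ coth x * sinh y := by gcongr; exact coth_le_coth hx hxy

lemma coth_mul_sinh_two_mul {x : ℝ} (hx : x ≠ 0) : coth x * sinh (2 * x) = cosh (2 * x) + 1 := by
  have hsx : sinh x ≠ 0 := sinh_ne_zero.mpr hx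
  rw [coth, sinh_two_mul, cosh_two_mul]
  field_simp
  linear_combination cosh_sq x

lemma sinh_add_two_mul_le {x y : ℝ} (hx : 0 < x) (hxy : x ≤ y) :
    sinh (y + 2 * x) ≤ (2 * cosh (2 * x) + 1) * sinh y := by
  have hs2x : 0 ≤ sinh (2 * x) := sinh_nonneg_iff.mpr (by positivity)
  calc sinh (y + 2 * x) = sinh y * cosh (2 * x) + cosh y * sinh (2 * x) := sinh_add y (2 * x)
    _ ≤ sinh y * cosh (2 * x) + coth x * sinh y * sinh (2 * x) := by
        gcongr; exact cosh_le_coth_mul_sinh hx hxy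
    _ = (2 * cosh (2 * x) + 1) * sinh y := by
        rw [mul_right_comm, coth_mul_sinh_two_mul hx.ne']
        ring

lemma cosh_le_eight_div_seven {x : ℝ} (hx : |x| ≤ 1 / 2) : cosh x ≤ 8 / 7 := by
  have hx2 : x ^ 2 / 2 ≤ 1 / 8 := by
    nlinarith [sq_abs x, abs_nonneg x]
  calc cosh x ≤ exp (x ^ 2 / 2) := cosh_le_exp_half_sq x
    _ ≤ exp (1 / 8) := exp_le_exp.mpr hx2
    _ ≤ 1 / (1 - 1 / 8) := exp_bound_div_one_sub_of_interval (by norm_num) (by norm_num)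
    _ = 8 / 7 := by norm_num

end Real

open Real in
/-- For `0 < ε < 1` and `a ≥ ε/2`,
`sinh²((a + ε)/2) ≤ 14 coth(ε/4) sinh²(a/2)`. -/
theorem sinh_sq_add_le' (ε a : ℝ) (hε0 : 0 < ε) (hε1 : ε < 1) (ha : ε / 2 ≤ a) :
    Real.sinh ((a + ε) / 2) ^ 2 ≤ 14 * Real.coth (ε / 4) * Real.sinh (a / 2) ^ 2 := by
  have hsinh : sinh ((a + ε) / 2) ≤ (2 * cosh (ε / 2) + 1) * sinh (a / 2) := by
    have h := sinh_add_two_mul_le (x := ε / 4) (y := a / 2) (by positivity) (by linarith)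
    rwa [show a / 2 + 2 * (ε / 4) = (a + ε) / 2 by ring, show 2 * (ε / 4) = ε / 2 by ring] at h
  have hcosh : cosh (ε / 2) ≤ 8 / 7 :=
    cosh_le_eight_div_seven (by rw [abs_of_pos (by positivity)]; linarith)
  have hsinh_nonneg : 0 ≤ sinh ((a + ε) / 2) := sinh_nonneg_iff.mpr (by linarith)
  calc sinh ((a + ε) / 2) ^ 2 ≤ ((2 * cosh (ε / 2) + 1) * sinh (a / 2)) ^ 2 := by gcongr
    _ = (2 * cosh (ε / 2) + 1) ^ 2 * sinh (a / 2) ^ 2 := mul_pow _ _ _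
    _ ≤ 14 * 1 * sinh (a / 2) ^ 2 := by
        gcongr
        nlinarith [one_le_cosh (ε / 2)]
    _ ≤ 14 * coth (ε / 4) * sinh (a / 2) ^ 2 := by
        gcongr; exact (one_lt_coth (by positivity)).le
end

section
/- For every z in the upper half-plane ℍ, the function w ↦ g_ℍ(z, w) + log |1 − e^{2πi(w − z)}|² tends to log(4 (Im z)²) + log(4π²) as w → z (with w ∈ ℍ, w ≠ z). -/
open Filter Topology

/-! Since `1 − e^{2πi(w − z)} = −2πi (w − z) + O(|w − z|²)`, the singularity `−log |z − w|²` of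
`g_ℍ(z, w)` cancels against that of the cusp coordinate: near `z` the sum equals
`log |z − w̄|² + log |(1 − e^{2πi(w − z)})/(z − w)|²`, which tends to `log |z − z̄|² + log |2πi|²`.
Both limits are nonzero, which also keeps every logarithm away from `log 0` near `z`. -/

open Complex in
theorem tendsto_one_sub_exp_mul_sub_div_sub (c z : ℂ) :
    Tendsto (fun w => (1 - exp (c * (w - z))) / (z - w)) (𝓝[≠] z) (𝓝 c) := by
  have hderiv : HasDerivAt (fun w => exp (c * (w - z))) c z := by
    simpa using (((hasDerivAt_id z).sub_const z).const_mul c).cexp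
  refine (hasDerivAt_iff_tendsto_slope.mp hderiv).congr fun w => ?_
  rw [slope_def_field, sub_self, mul_zero, exp_zero, ← neg_sub z w, ← neg_sub 1, neg_div_neg_eq]

theorem log_sq_norm_div_add_log_sq_norm {𝕜 : Type*} [NormedDivisionRing 𝕜] {a b c : 𝕜}
    (ha : a ≠ 0) (hb : b ≠ 0) (hc : c ≠ 0) :
    Real.log (‖a / b‖ ^ 2) + Real.log (‖c‖ ^ 2) = Real.log (‖a‖ ^ 2) + Real.log (‖c / b‖ ^ 2) := by
  have hsq {x : 𝕜} (hx : x ≠ 0) : ‖x‖ ^ 2 ≠ 0 := by positivity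
  rw [norm_div, norm_div, div_pow, div_pow, Real.log_div (hsq ha) (hsq hb),
    Real.log_div (hsq hc) (hsq hb)]
  ring

theorem Complex.sq_norm_sub_conj (z : ℂ) : ‖z - (starRingEnd ℂ) z‖ ^ 2 = 4 * z.im ^ 2 := by
  rw [Complex.sub_conj, norm_mul, Complex.norm_I, mul_one, Complex.norm_real, Real.norm_eq_abs,
    sq_abs]
  ring

theorem Complex.sq_norm_two_pi_I : ‖2 * (Real.pi : ℂ) * Complex.I‖ ^ 2 = 4 * Real.pi ^ 2 := by
  rw [norm_mul, norm_mul, Complex.norm_I, Complex.norm_two, Complex.norm_real, Real.norm_eq_abs,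
    mul_one, mul_pow, sq_abs]
  norm_num

/-- For `z` in the upper half-plane, the function
`w ↦ g_ℍ(z,w) + log |1 − e^{2πi(w − z)}|²` tends to `log(4 (Im z)²) + log(4π²)`
as `w → z` along points of the upper half-plane distinct from `z`. -/
theorem freeGreen_cusp_coordinate_limit (z : ℂ) (hz : 0 < z.im) :
    Tendsto (fun w : ℂ =>
        Real.log ((‖(z - (starRingEnd ℂ) w) / (z - w)‖) ^ 2)
          + Real.log ((‖1 - Complex.exp (2 * Real.pi * Complex.I * (w - z))‖) ^ 2))
      (𝓝[{w : ℂ | 0 < w.im} \ {z}] z)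
      (𝓝 (Real.log (4 * z.im ^ 2) + Real.log (4 * Real.pi ^ 2))) := by
  set L := 𝓝[{w : ℂ | 0 < w.im} \ {z}] z
  have hconj : Tendsto (fun w => z - (starRingEnd ℂ) w) L (𝓝 (z - (starRingEnd ℂ) z)) :=
    ((continuous_const.sub Complex.continuous_conj).tendsto z).mono_left nhdsWithin_le_nhds
  have hcusp : Tendsto (fun w => (1 - Complex.exp (2 * Real.pi * Complex.I * (w - z))) / (z - w))
      L (𝓝 (2 * Real.pi * Complex.I)) :=
    (tendsto_one_sub_exp_mul_sub_div_sub _ z).mono_left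
      (nhdsWithin_mono z (Set.sdiff_subset_compl _ _))
  have hconj_ne : z - (starRingEnd ℂ) z ≠ 0 := by
    simp [Complex.sub_conj, hz.ne']
  have hcusp_ne : 2 * (Real.pi : ℂ) * Complex.I ≠ 0 := by
    simp [Real.pi_ne_zero]
  have hsplit := ((hconj.norm.pow 2).log (by positivity)).add
    ((hcusp.norm.pow 2).log (by positivity))
  rw [Complex.sq_norm_sub_conj, Complex.sq_norm_two_pi_I] at hsplit
  refine hsplit.congr' ?_
  filter_upwards [self_mem_nhdsWithin, hconj.eventually_ne hconj_ne,
    hcusp.eventually_ne hcusp_ne] with w hw hconj_w hcusp_w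
  exact (log_sq_norm_div_add_log_sq_norm hconj_w (sub_ne_zero.2 (Ne.symm hw.2))
    (div_ne_zero_iff.mp hcusp_w).1).symm
end

section
/- For every t₀ > 0 there exists a constant c₀ > 0 such that for all t with 0 < t ≤ t₀ and all η ≥ 0, the hyperbolic heat kernel K_ℍ(t; η) = (√2 · e^{−t/4}/(4πt)^{3/2}) · ∫_η^∞ r·e^{−r²/(4t)}/√(cosh r − cosh η) dr satisfies K_ℍ(t; η) ≤ (c₀/(4πt))·e^{−η²/(4t)}. -/
open MeasureTheory

/-- The heat kernel on the hyperbolic upper half-plane, at time `t > 0` and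
hyperbolic distance `η ≥ 0`. -/
noncomputable def hypHeatKernel (t η : ℝ) : ℝ :=
  (Real.sqrt 2 * Real.exp (-t / 4) / (4 * Real.pi * t) ^ ((3 : ℝ) / 2)) *
    ∫ r in Set.Ioi η, r * Real.exp (-r ^ 2 / (4 * t)) / Real.sqrt (Real.cosh r - Real.cosh η)

/-!
Since `cosh r - cosh η ≥ (r² - η²)/2` and `r ≤ √(r + η) (√(r - η) + √η)`, the integrand is at most
`√2 (1 + √η / √(r - η)) e^{-r²/(4t)}`. Writing `r² = η² + 2η(r - η) + (r - η)²` and dropping one of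
the last two terms in each summand leaves `e^{-η²/(4t)}` times a Gaussian plus a `Γ(1/2)`-integral in
`s = r - η`, of total size `(1 + √2) √(πt)`. Hence `K_ℍ(t; η) ≤ (1 + √2) e^{-t/4} e^{-η²/(4t)} / (4πt)`
for every `t > 0`.
-/

open Real Set

namespace Real

theorem cosh_sub_cosh (x y : ℝ) :
    cosh x - cosh y = 2 * sinh ((x + y) / 2) * sinh ((x - y) / 2) := by
  have hx : cosh x = cosh ((x + y) / 2 + (x - y) / 2) := by ring_nf
  have hy : cosh y = cosh ((x + y) / 2 - (x - y) / 2) := by ring_nf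
  rw [hx, hy, cosh_add, cosh_sub]
  ring

theorem sq_sub_sq_div_two_le_cosh_sub_cosh {x y : ℝ} (h : |y| ≤ x) :
    (x ^ 2 - y ^ 2) / 2 ≤ cosh x - cosh y := by
  obtain ⟨h₁, h₂⟩ := abs_le.1 h
  have hp : 0 ≤ (x + y) / 2 := by linarith
  have hm : 0 ≤ (x - y) / 2 := by linarith
  rw [cosh_sub_cosh]
  nlinarith [self_le_sinh_iff.2 hp, self_le_sinh_iff.2 hm, sinh_nonneg_iff.2 hp]

theorem div_sqrt_cosh_sub_cosh_le {η r : ℝ} (hη : 0 ≤ η) (hr : η < r) :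
    r / √(cosh r - cosh η) ≤ √2 * (1 + √η / √(r - η)) := by
  have hs : 0 < r - η := sub_pos.2 hr
  have hp : 0 < r + η := by linarith
  have hden : √(r + η) * √(r - η) / √2 ≤ √(cosh r - cosh η) := by
    rw [← sqrt_mul hp.le, ← sqrt_div' _ zero_le_two, ← sq_sub_sq]
    exact sqrt_le_sqrt (sq_sub_sq_div_two_le_cosh_sub_cosh (by rw [abs_of_nonneg hη]; exact hr.le))
  have hnum : r ≤ √(r + η) * (√(r - η) + √η) := by
    have hu := sq_sqrt hs.le
    have hv := sq_sqrt hη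
    have hw := sq_sqrt hp.le
    refine le_of_pow_le_pow_left₀ two_ne_zero (by positivity) ?_
    nlinarith [mul_nonneg (sqrt_nonneg (r - η)) (sqrt_nonneg η)]
  calc r / √(cosh r - cosh η) ≤ r / (√(r + η) * √(r - η) / √2) :=
        div_le_div_of_nonneg_left (hη.trans hr.le) (by positivity) hden
    _ ≤ √(r + η) * (√(r - η) + √η) / (√(r + η) * √(r - η) / √2) := by gcongr
    _ = √2 * (1 + √η / √(r - η)) := by field_simp

theorem rpow_three_halves_eq_mul_sqrt {x : ℝ} (hx : 0 ≤ x) : x ^ (3 / 2 : ℝ) = x * √x := by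
  rw [show (3 / 2 : ℝ) = 1 + 1 / 2 by norm_num, rpow_add' hx (by norm_num), rpow_one,
    sqrt_eq_rpow]

theorem integral_gaussian_Ioi_one_div_four_mul (t : ℝ) :
    ∫ s in Ioi 0, exp (-(1 / (4 * t)) * s ^ 2) = √(π * t) := by
  rw [integral_gaussian_Ioi, div_div_eq_mul_div, div_one,
    show π * (4 * t) = 2 ^ 2 * (π * t) by ring, sqrt_mul (by positivity), sqrt_sq zero_le_two]
  ring

theorem integral_inv_sqrt_mul_exp_neg_mul_Ioi {a : ℝ} (ha : 0 < a) :
    ∫ s in Ioi 0, (√s)⁻¹ * exp (-(a * s)) = √(π / a) := by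
  have hGamma := integral_rpow_mul_exp_neg_mul_Ioi one_half_pos ha
  rw [Gamma_one_half_eq, ← sqrt_eq_rpow, ← sqrt_mul (by positivity), one_div_mul_eq_div] at hGamma
  rw [← hGamma]
  refine setIntegral_congr_fun measurableSet_Ioi fun s (hs : 0 < s) => ?_
  rw [show (1 / 2 : ℝ) - 1 = -(1 / 2) by norm_num, rpow_neg hs.le, ← sqrt_eq_rpow]

theorem integrableOn_inv_sqrt_mul_exp_neg_mul_Ioi {a : ℝ} (ha : 0 < a) :
    IntegrableOn (fun s => (√s)⁻¹ * exp (-(a * s))) (Ioi 0) :=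
  .of_integral_ne_zero (by rw [integral_inv_sqrt_mul_exp_neg_mul_Ioi ha]; positivity)

end Real

namespace MeasureTheory

variable {E : Type*} [NormedAddCommGroup E]

theorem integrableOn_Ioi_comp_sub_iff {f : ℝ → E} (a : ℝ) :
    IntegrableOn (fun r => f (r - a)) (Ioi a) ↔ IntegrableOn f (Ioi 0) := by
  have := (measurePreserving_sub_right volume a).integrableOn_comp_preimage
    (measurableEmbedding_subRight a) (f := f) (s := Ioi 0)
  rwa [preimage_sub_const_Ioi, zero_add] at this

theorem setIntegral_Ioi_comp_sub [NormedSpace ℝ E] (f : ℝ → E) (a : ℝ) :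
    ∫ r in Ioi a, f (r - a) = ∫ s in Ioi 0, f s := by
  have := (measurePreserving_sub_right volume a).setIntegral_preimage_emb
    (measurableEmbedding_subRight a) f (Ioi 0)
  rwa [preimage_sub_const_Ioi, zero_add] at this

end MeasureTheory

theorem exp_neg_sq_div_le_mul_exp_neg_sq_sub {t η r : ℝ} (ht : 0 < t) (hη : 0 ≤ η) (hr : η ≤ r) :
    exp (-r ^ 2 / (4 * t)) ≤ exp (-η ^ 2 / (4 * t)) * exp (-(1 / (4 * t)) * (r - η) ^ 2) := by
  rw [← exp_add, exp_le_exp]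
  have hsplit : -r ^ 2 / (4 * t) =
      -η ^ 2 / (4 * t) + -(1 / (4 * t)) * (r - η) ^ 2 - η * (r - η) / (2 * t) := by
    field_simp; ring
  have : 0 ≤ η * (r - η) / (2 * t) := by have := sub_nonneg.2 hr; positivity
  linarith

theorem exp_neg_sq_div_le_mul_exp_neg_mul_sub {t η r : ℝ} (ht : 0 < t) :
    exp (-r ^ 2 / (4 * t)) ≤ exp (-η ^ 2 / (4 * t)) * exp (-(η / (2 * t) * (r - η))) := by
  rw [← exp_add, exp_le_exp]
  have hsplit : -r ^ 2 / (4 * t) =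
      -η ^ 2 / (4 * t) + -(η / (2 * t) * (r - η)) - (r - η) ^ 2 / (4 * t) := by
    field_simp; ring
  have : 0 ≤ (r - η) ^ 2 / (4 * t) := by positivity
  linarith

noncomputable def hypHeatMajorant (t η s : ℝ) : ℝ :=
  exp (-(1 / (4 * t)) * s ^ 2) + √η * ((√s)⁻¹ * exp (-(η / (2 * t) * s)))

theorem mul_exp_div_sqrt_cosh_sub_cosh_le {t η r : ℝ} (ht : 0 < t) (hη : 0 ≤ η) (hr : η < r) :
    r * exp (-r ^ 2 / (4 * t)) / √(cosh r - cosh η) ≤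
      √2 * exp (-η ^ 2 / (4 * t)) * hypHeatMajorant t η (r - η) := by
  calc r * exp (-r ^ 2 / (4 * t)) / √(cosh r - cosh η)
      = r / √(cosh r - cosh η) * exp (-r ^ 2 / (4 * t)) := by ring
    _ ≤ √2 * (1 + √η / √(r - η)) * exp (-r ^ 2 / (4 * t)) := by
      gcongr; exact div_sqrt_cosh_sub_cosh_le hη hr
    _ = √2 * (exp (-r ^ 2 / (4 * t)) + √η * ((√(r - η))⁻¹ * exp (-r ^ 2 / (4 * t)))) := by ring
    _ ≤ √2 * (exp (-η ^ 2 / (4 * t)) * exp (-(1 / (4 * t)) * (r - η) ^ 2) +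
          √η * ((√(r - η))⁻¹ * (exp (-η ^ 2 / (4 * t)) * exp (-(η / (2 * t) * (r - η)))))) := by
      gcongr
      · exact exp_neg_sq_div_le_mul_exp_neg_sq_sub ht hη hr.le
      · exact exp_neg_sq_div_le_mul_exp_neg_mul_sub ht
    _ = √2 * exp (-η ^ 2 / (4 * t)) * hypHeatMajorant t η (r - η) := by
      rw [hypHeatMajorant]; ring

theorem hypHeatMajorant_zero (t : ℝ) :
    hypHeatMajorant t 0 = fun s => exp (-(1 / (4 * t)) * s ^ 2) := by
  ext s; simp [hypHeatMajorant]

theorem integrableOn_hypHeatMajorant {t η : ℝ} (ht : 0 < t) (hη : 0 ≤ η) :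
    IntegrableOn (hypHeatMajorant t η) (Ioi 0) := by
  have hGauss : IntegrableOn (fun s => exp (-(1 / (4 * t)) * s ^ 2)) (Ioi 0) :=
    (integrable_exp_neg_mul_sq (by positivity)).integrableOn
  rcases hη.eq_or_lt with rfl | hη
  · rwa [hypHeatMajorant_zero]
  · exact hGauss.add ((integrableOn_inv_sqrt_mul_exp_neg_mul_Ioi (by positivity)).const_mul _)

theorem integral_hypHeatMajorant_le {t η : ℝ} (ht : 0 < t) (hη : 0 ≤ η) :
    ∫ s in Ioi 0, hypHeatMajorant t η s ≤ (1 + √2) * √(π * t) := by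
  have hπt : 0 ≤ √2 * √(π * t) := by positivity
  rcases hη.eq_or_lt with rfl | hη
  · rw [hypHeatMajorant_zero, integral_gaussian_Ioi_one_div_four_mul]
    linarith
  · have hb : 0 < η / (2 * t) := by positivity
    have hGamma : √η * √(π / (η / (2 * t))) = √2 * √(π * t) := by
      rw [← sqrt_mul hη.le, ← sqrt_mul zero_le_two]
      congr 1
      field_simp
    simp only [hypHeatMajorant]
    rw [integral_add (integrable_exp_neg_mul_sq (by positivity)).integrableOn
        ((integrableOn_inv_sqrt_mul_exp_neg_mul_Ioi hb).const_mul _),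
      integral_const_mul, integral_gaussian_Ioi_one_div_four_mul, integral_inv_sqrt_mul_exp_neg_mul_Ioi hb,
      hGamma]
    linarith

theorem integral_Ioi_mul_exp_div_sqrt_cosh_sub_cosh_le {t η : ℝ} (ht : 0 < t) (hη : 0 ≤ η) :
    ∫ r in Ioi η, r * exp (-r ^ 2 / (4 * t)) / √(cosh r - cosh η) ≤
      √2 * exp (-η ^ 2 / (4 * t)) * ((1 + √2) * √(π * t)) := by
  have hmajorant : IntegrableOn (fun r => √2 * exp (-η ^ 2 / (4 * t)) * hypHeatMajorant t η (r - η))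
      (Ioi η) :=
    ((integrableOn_Ioi_comp_sub_iff η).2 (integrableOn_hypHeatMajorant ht hη)).const_mul _
  calc ∫ r in Ioi η, r * exp (-r ^ 2 / (4 * t)) / √(cosh r - cosh η)
      ≤ ∫ r in Ioi η, √2 * exp (-η ^ 2 / (4 * t)) * hypHeatMajorant t η (r - η) := by
        refine integral_mono_of_nonneg ?_ hmajorant ?_
        · filter_upwards [ae_restrict_mem measurableSet_Ioi] with r (hr : η < r)
          have := hη.trans_lt hr
          positivity
        · filter_upwards [ae_restrict_mem measurableSet_Ioi] with r hr
          exact mul_exp_div_sqrt_cosh_sub_cosh_le ht hη hr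
    _ = √2 * exp (-η ^ 2 / (4 * t)) * ∫ s in Ioi 0, hypHeatMajorant t η s := by
        rw [integral_const_mul, setIntegral_Ioi_comp_sub (hypHeatMajorant t η)]
    _ ≤ √2 * exp (-η ^ 2 / (4 * t)) * ((1 + √2) * √(π * t)) := by
        gcongr; exact integral_hypHeatMajorant_le ht hη

theorem hypHeatKernel_le {t η : ℝ} (ht : 0 < t) (hη : 0 ≤ η) :
    hypHeatKernel t η ≤ (1 + √2) * exp (-t / 4) / (4 * π * t) * exp (-η ^ 2 / (4 * t)) := by
  have hsqrt : √(4 * π * t) = 2 * √(π * t) := by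
    rw [mul_assoc, sqrt_mul zero_le_four, show (4 : ℝ) = 2 ^ 2 by norm_num, sqrt_sq zero_le_two]
  calc hypHeatKernel t η
      ≤ √2 * exp (-t / 4) / (4 * π * t) ^ (3 / 2 : ℝ) *
          (√2 * exp (-η ^ 2 / (4 * t)) * ((1 + √2) * √(π * t))) := by
        rw [hypHeatKernel]
        gcongr
        exact integral_Ioi_mul_exp_div_sqrt_cosh_sub_cosh_le ht hη
    _ = (1 + √2) * exp (-t / 4) / (4 * π * t) * exp (-η ^ 2 / (4 * t)) := by
        rw [rpow_three_halves_eq_mul_sqrt (by positivity), hsqrt]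
        field_simp
        exact sq_sqrt zero_le_two

theorem hypHeatKernel_small_time_bound_general (t₀ : ℝ) :
    ∃ c₀ > (0 : ℝ), ∀ t : ℝ, 0 < t → t ≤ t₀ → ∀ η : ℝ, 0 ≤ η →
      hypHeatKernel t η ≤ c₀ / (4 * Real.pi * t) * Real.exp (-η ^ 2 / (4 * t)) := by
  refine ⟨1 + √2, by positivity, fun t ht _ η hη => (hypHeatKernel_le ht hη).trans ?_⟩
  gcongr
  exact mul_le_of_le_one_right (by positivity) (exp_le_one_iff.2 (by linarith))

/-- For every `t₀ > 0` there is `c₀ > 0` with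
`K_ℍ(t; η) ≤ (c₀/(4πt)) e^{−η²/(4t)}` for all `0 < t ≤ t₀` and `η ≥ 0`. -/
theorem hypHeatKernel_small_time_bound (t₀ : ℝ) (ht₀ : 0 < t₀) :
    ∃ c₀ > (0 : ℝ), ∀ t : ℝ, 0 < t → t ≤ t₀ → ∀ η : ℝ, 0 ≤ η →
      hypHeatKernel t η ≤ c₀ / (4 * Real.pi * t) * Real.exp (-η ^ 2 / (4 * t)) :=
  hypHeatKernel_small_time_bound_general t₀
end

section
/- The improper integral ∫₀^∞ log(coth ρ)·sinh ρ dρ converges and equals log 2; equivalently, ∫₀^∞ log(coth² ρ)·sinh ρ dρ = 2·log 2. -/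
/-!
Substituting `t = cosh ρ` turns the integrand into `(log t - (log (t - 1) + log (t + 1)) / 2) dt`.
Its primitive `mulLogMidpointDefect t = t log t - ((t - 1) log (t - 1) + (t + 1) log (t + 1)) / 2`
is minus half a second difference of the convex function `x log x`, hence lies in `[-1 / t, 0]`
and tends to `0`, while its value at `t = 1` is `-log 2`. The integrand being nonnegative, this
primitive gives both integrability and the value `0 - (-log 2) = log 2`.
-/

open MeasureTheory

open Filter Topology Real

noncomputable def mulLogMidpointDefect (t : ℝ) : ℝ :=
  t * log t - ((t - 1) * log (t - 1) + (t + 1) * log (t + 1)) / 2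

lemma mulLogMidpointDefect_one : mulLogMidpointDefect 1 = -log 2 := by
  norm_num [mulLogMidpointDefect]

lemma continuous_mulLogMidpointDefect : Continuous mulLogMidpointDefect := by
  unfold mulLogMidpointDefect
  fun_prop

lemma hasDerivAt_mulLogMidpointDefect {t : ℝ} (ht : 1 < t) :
    HasDerivAt mulLogMidpointDefect (log t - (log (t - 1) + log (t + 1)) / 2) t := by
  have hsub := (hasDerivAt_mul_log (x := t - 1) (by linarith)).comp t
    ((hasDerivAt_id t).sub_const 1)
  have hadd := (hasDerivAt_mul_log (x := t + 1) (by linarith)).comp t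
    ((hasDerivAt_id t).add_const 1)
  exact ((hasDerivAt_mul_log (x := t) (by linarith)).sub
    ((hsub.add hadd).div_const 2)).congr_deriv (by ring)

lemma Real.sub_div_le_log_sub_log {a b : ℝ} (ha : 0 < a) (hb : 0 < b) :
    (b - a) / b ≤ log b - log a := by
  have := one_sub_inv_le_log_of_pos (div_pos hb ha)
  rwa [log_div hb.ne' ha.ne', inv_div, one_sub_div hb.ne'] at this

lemma Real.log_sub_log_le_sub_div {a b : ℝ} (ha : 0 < a) (hb : 0 < b) :
    log b - log a ≤ (b - a) / a := by
  have := log_le_sub_one_of_pos (div_pos hb ha)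
  rwa [log_div hb.ne' ha.ne', div_sub_one ha.ne'] at this

lemma two_mul_mulLogMidpointDefect (t : ℝ) :
    2 * mulLogMidpointDefect t =
      (t - 1) * (log t - log (t - 1)) - (t + 1) * (log (t + 1) - log t) := by
  unfold mulLogMidpointDefect
  ring

lemma mulLogMidpointDefect_nonpos {t : ℝ} (ht : 1 < t) : mulLogMidpointDefect t ≤ 0 := by
  have hlow := log_sub_log_le_sub_div (by linarith : 0 < t - 1) (by linarith : 0 < t)
  have hup := sub_div_le_log_sub_log (by linarith : 0 < t) (by linarith : 0 < t + 1)
  have h₁ : (t - 1) * (log t - log (t - 1)) ≤ 1 := by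
    calc _ ≤ (t - 1) * ((t - (t - 1)) / (t - 1)) := by gcongr
      _ = 1 := by rw [sub_sub_cancel, mul_one_div_cancel (by linarith)]
  have h₂ : 1 ≤ (t + 1) * (log (t + 1) - log t) := by
    calc 1 = (t + 1) * ((t + 1 - t) / (t + 1)) := by
          rw [add_sub_cancel_left, mul_one_div_cancel (by linarith)]
      _ ≤ _ := by gcongr
  linarith [two_mul_mulLogMidpointDefect t]

lemma neg_inv_le_mulLogMidpointDefect {t : ℝ} (ht : 1 < t) :
    -t⁻¹ ≤ mulLogMidpointDefect t := by
  have hlow := sub_div_le_log_sub_log (by linarith : 0 < t - 1) (by linarith : 0 < t)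
  have hup := log_sub_log_le_sub_div (by linarith : 0 < t) (by linarith : 0 < t + 1)
  have h₁ : (t - 1) / t ≤ (t - 1) * (log t - log (t - 1)) := by
    calc (t - 1) / t = (t - 1) * ((t - (t - 1)) / t) := by ring
      _ ≤ _ := by gcongr
  have h₂ : (t + 1) * (log (t + 1) - log t) ≤ (t + 1) / t := by
    calc _ ≤ (t + 1) * ((t + 1 - t) / t) := by gcongr
      _ = (t + 1) / t := by ring
  have h₃ : (t - 1) / t - (t + 1) / t = -2 * t⁻¹ := by field_simp; ring
  linarith [two_mul_mulLogMidpointDefect t]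

lemma tendsto_mulLogMidpointDefect_atTop : Tendsto mulLogMidpointDefect atTop (𝓝 0) := by
  have hlow : Tendsto (fun t : ℝ => -t⁻¹) atTop (𝓝 0) := by
    simpa using (tendsto_inv_atTop_zero (𝕜 := ℝ)).neg
  refine tendsto_of_tendsto_of_tendsto_of_le_of_le' hlow tendsto_const_nhds ?_ ?_
  · filter_upwards [eventually_gt_atTop 1] with t ht using neg_inv_le_mulLogMidpointDefect ht
  · filter_upwards [eventually_gt_atTop 1] with t ht using mulLogMidpointDefect_nonpos ht

lemma Real.tendsto_cosh_atTop : Tendsto cosh atTop atTop := by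
  refine tendsto_atTop_mono' _ ?_ tendsto_id
  filter_upwards [eventually_ge_atTop 0] with x hx
  exact (self_le_sinh_iff.2 hx).trans (sinh_lt_cosh x).le

lemma Real.log_coth_eq {ρ : ℝ} (hρ : ρ ≠ 0) :
    log (coth ρ) = log (cosh ρ) - (log (cosh ρ - 1) + log (cosh ρ + 1)) / 2 := by
  have hc : 1 < cosh ρ := one_lt_cosh.2 hρ
  have hs : sinh ρ ≠ 0 := sinh_ne_zero.2 hρ
  have hsq : sinh ρ ^ 2 = (cosh ρ - 1) * (cosh ρ + 1) := by rw [sinh_sq]; ring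
  have hlog_sinh : log (sinh ρ) = (log (cosh ρ - 1) + log (cosh ρ + 1)) / 2 := by
    rw [← log_mul (by linarith) (by linarith), ← hsq, log_pow]
    push_cast
    ring
  rw [coth, log_div (by positivity) hs, hlog_sinh]

lemma Real.one_le_coth_s18 {ρ : ℝ} (hρ : 0 < ρ) : 1 ≤ coth ρ :=
  (one_le_div (sinh_pos_iff.2 hρ)).2 (sinh_lt_cosh ρ).le

lemma hasDerivAt_mulLogMidpointDefect_cosh {ρ : ℝ} (hρ : ρ ≠ 0) :
    HasDerivAt (mulLogMidpointDefect ∘ cosh) (log (coth ρ) * sinh ρ) ρ := by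
  rw [log_coth_eq hρ]
  exact (hasDerivAt_mulLogMidpointDefect (one_lt_cosh.2 hρ)).comp ρ (hasDerivAt_cosh ρ)

/-- The improper integral `∫₀^∞ log(coth ρ) sinh ρ dρ` converges and
equals `log 2`; equivalently `∫₀^∞ log(coth² ρ) sinh ρ dρ = 2 log 2`. -/
theorem integral_log_coth_sinh :
    IntegrableOn (fun ρ : ℝ => Real.log (Real.coth ρ) * Real.sinh ρ) (Set.Ioi 0) ∧
    (∫ ρ in Set.Ioi (0 : ℝ), Real.log (Real.coth ρ) * Real.sinh ρ) = Real.log 2 ∧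
    (∫ ρ in Set.Ioi (0 : ℝ), Real.log ((Real.coth ρ) ^ 2) * Real.sinh ρ) = 2 * Real.log 2 := by
  have hcont : ContinuousWithinAt (mulLogMidpointDefect ∘ cosh) (Set.Ici 0) 0 :=
    (continuous_mulLogMidpointDefect.comp continuous_cosh).continuousWithinAt
  have hderiv : ∀ ρ ∈ Set.Ioi (0 : ℝ),
      HasDerivAt (mulLogMidpointDefect ∘ cosh) (log (coth ρ) * sinh ρ) ρ :=
    fun ρ hρ => hasDerivAt_mulLogMidpointDefect_cosh hρ.ne'
  have hnonneg : ∀ ρ ∈ Set.Ioi (0 : ℝ), 0 ≤ log (coth ρ) * sinh ρ :=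
    fun ρ hρ => mul_nonneg (log_nonneg (one_le_coth_s18 hρ)) (sinh_pos_iff.2 hρ).le
  have hlim := tendsto_mulLogMidpointDefect_atTop.comp tendsto_cosh_atTop
  have hval : ∫ ρ in Set.Ioi (0 : ℝ), log (coth ρ) * sinh ρ = log 2 := by
    rw [integral_Ioi_of_hasDerivAt_of_nonneg hcont hderiv hnonneg hlim, Function.comp_apply,
      cosh_zero, mulLogMidpointDefect_one, zero_sub, neg_neg]
  refine ⟨integrableOn_Ioi_deriv_of_nonneg hcont hderiv hnonneg hlim, hval, ?_⟩
  simp_rw [log_pow, Nat.cast_ofNat, mul_assoc]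
  rw [integral_const_mul, hval]
end
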